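/- arXiv:2308.15642 — 3 statements merged into one kernel-verified Lean document; each statement's English description precedes it below -/
import Mathlib

section
/- Let M be a real symmetric n×n matrix, λ ∈ ℝ with λ_1(M) > λ, and let v be a unit-norm eigenvector of M for the eigenvalue λ_1(M) with ‖v‖_∞ > 0. Suppose y ∈ ℝ^n is such that y yᵀ maximizes ⟨Y, M − λI⟩ over the set {Y ∈ ℝ^{n×n} : Y symmetric positive semidefinite, Y_{ii} ≤ 1 for all i}. Then ‖y‖_2 ≥ 1/‖v‖_∞. -/
open Matrix

/-- The eigenvalues of a real symmetric matrix, listed in decreasing order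
(`eigDesc hM ⟨0, _⟩` is the largest eigenvalue). -/
noncomputable def eigDesc {n : ℕ} {M : Matrix (Fin n) (Fin n) ℝ} (hM : M.IsHermitian) :
    Fin n → ℝ :=
  fun i => -(((fun j => -hM.eigenvalues j) ∘ Tuple.sort (fun j => -hM.eigenvalues j)) i)

/-- Trace inner product `⟨X, Y⟩ = Σ_{i,j} X_{ij} Y_{ij}`. -/
noncomputable def mip {d : ℕ} (X Y : Matrix (Fin d) (Fin d) ℝ) : ℝ :=
  ∑ i, ∑ j, X i j * Y i j

/-! The rescaled top eigenvector `Y = v vᵀ / ‖v‖∞²` is feasible, since its diagonal entries are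
`vᵢ² / ‖v‖∞² ≤ 1`, and has value `(λ₁ - λ) / ‖v‖∞²`. By optimality of `y yᵀ` and the Rayleigh
bound `yᵀ M y ≤ λ₁ ‖y‖²`, this value is at most `(λ₁ - λ) ‖y‖²`; dividing by `λ₁ - λ > 0` gives
`‖y‖² ≥ 1 / ‖v‖∞²`. -/

open scoped MatrixOrder in
theorem Matrix.IsHermitian.dotProduct_mulVec_le {ι : Type*} [Fintype ι] [DecidableEq ι]
    {M : Matrix ι ι ℝ} (hM : M.IsHermitian) {L : ℝ} (hL : ∀ i, hM.eigenvalues i ≤ L)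
    (x : ι → ℝ) : x ⬝ᵥ M *ᵥ x ≤ L * (x ⬝ᵥ x) := by
  have hle : M ≤ algebraMap ℝ (Matrix ι ι ℝ) L :=
    le_algebraMap_of_spectrum_le (by
      rw [hM.spectrum_real_eq_range_eigenvalues]
      rintro _ ⟨i, rfl⟩
      exact hL i) hM
  have := (Matrix.le_iff.mp hle).dotProduct_mulVec_nonneg x
  simp only [Algebra.algebraMap_eq_smul_one, star_trivial, sub_mulVec, smul_mulVec, one_mulVec,
    dotProduct_sub, dotProduct_smul, smul_eq_mul] at this
  linarith

theorem eigenvalues_le_eigDesc_zero {n : ℕ} (hn : 0 < n) {M : Matrix (Fin n) (Fin n) ℝ}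
    (hM : M.IsHermitian) (i : Fin n) : hM.eigenvalues i ≤ eigDesc hM ⟨0, hn⟩ := by
  set g : Fin n → ℝ := fun j => -hM.eigenvalues j
  have h := Tuple.monotone_sort g (show (⟨0, hn⟩ : Fin n) ≤ (Tuple.sort g).symm i from
    Nat.zero_le _)
  simp only [Function.comp_apply, Equiv.apply_symm_apply, g] at h
  simp only [eigDesc, Function.comp_apply]
  linarith

theorem mip_smul_left {d : ℕ} (c : ℝ) (X Y : Matrix (Fin d) (Fin d) ℝ) :
    mip (c • X) Y = c * mip X Y := by
  simp [mip, Finset.mul_sum, mul_assoc]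

theorem mip_vecMulVec {d : ℕ} (a b : Fin d → ℝ) (N : Matrix (Fin d) (Fin d) ℝ) :
    mip (vecMulVec a b) N = a ⬝ᵥ N *ᵥ b := by
  simp only [mip, vecMulVec_apply, dotProduct, mulVec, Finset.mul_sum]
  exact Finset.sum_congr rfl fun i _ => Finset.sum_congr rfl fun j _ => by ring

theorem mip_vecMulVec_sub_smul_one {d : ℕ} (a : Fin d → ℝ) (M : Matrix (Fin d) (Fin d) ℝ)
    (lam : ℝ) : mip (vecMulVec a a) (M - lam • 1) = a ⬝ᵥ M *ᵥ a - lam * (a ⬝ᵥ a) := by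
  rw [mip_vecMulVec, sub_mulVec, smul_mulVec, one_mulVec, dotProduct_sub, dotProduct_smul,
    smul_eq_mul]

theorem vecMulVec_self_apply_self_le_sq_norm {ι : Type*} [Fintype ι] (v : ι → ℝ) (i : ι) :
    vecMulVec v v i i ≤ ‖v‖ ^ 2 := by
  rw [vecMulVec_apply, ← sq, ← sq_abs, ← Real.norm_eq_abs]
  gcongr
  exact norm_le_pi_norm v i

theorem inv_sq_norm_smul_vecMulVec_self_apply_self_le_one {ι : Type*} [Fintype ι] (v : ι → ℝ)
    (i : ι) : ((‖v‖ ^ 2)⁻¹ • vecMulVec v v) i i ≤ 1 :=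
  inv_mul_le_one_of_le₀ (vecMulVec_self_apply_self_le_sq_norm v i) (by positivity)

theorem relaxed_oracle_norm_lower_bound_general
    {n : ℕ} (hn : 0 < n) (M : Matrix (Fin n) (Fin n) ℝ) (hM : M.IsHermitian)
    (lam : ℝ) (hlam : lam < eigDesc hM ⟨0, hn⟩)
    (v : Fin n → ℝ) (hv : v ⬝ᵥ v = 1)
    (hveig : M.mulVec v = eigDesc hM ⟨0, hn⟩ • v)
    (y : Fin n → ℝ)
    (hymax : ∀ Y : Matrix (Fin n) (Fin n) ℝ, Y.PosSemidef → (∀ i, Y i i ≤ 1) →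
      mip Y (M - lam • (1 : Matrix (Fin n) (Fin n) ℝ)) ≤
        mip (Matrix.vecMulVec y y) (M - lam • (1 : Matrix (Fin n) (Fin n) ℝ))) :
    1 / ‖v‖ ≤ Real.sqrt (y ⬝ᵥ y) := by
  set L := eigDesc hM ⟨0, hn⟩
  set c := (‖v‖ ^ 2)⁻¹
  have hYpsd : (c • vecMulVec v v).PosSemidef := by
    simpa using (posSemidef_vecMulVec_self_star v).smul (by positivity : 0 ≤ c)
  have hopt := hymax _ hYpsd (inv_sq_norm_smul_vecMulVec_self_apply_self_le_one v)
  rw [mip_smul_left, mip_vecMulVec_sub_smul_one, mip_vecMulVec_sub_smul_one, hveig,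
    dotProduct_smul, hv, smul_eq_mul, mul_one] at hopt
  have hray := hM.dotProduct_mulVec_le (eigenvalues_le_eigDesc_zero hn hM) y
  have hcy : c ≤ y ⬝ᵥ y := le_of_mul_le_mul_left (by linarith) (sub_pos.mpr hlam)
  exact Real.le_sqrt_of_sq_le (by rwa [one_div, inv_pow])

/-- If `λ₁(M) > λ`, `v` is a unit top-eigenvector of `M`, and `y yᵀ` maximizes
`⟨Y, M − λI⟩` over symmetric PSD matrices with diagonal entries `≤ 1`,
then `‖y‖₂ ≥ 1/‖v‖_∞`.  (Here `‖v‖` is the sup norm on `Fin n → ℝ`, i.e. `‖v‖_∞`,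
and `Real.sqrt (y ⬝ᵥ y)` is the Euclidean norm `‖y‖₂`.) -/
theorem relaxed_oracle_norm_lower_bound
    {n : ℕ} (hn : 0 < n) (M : Matrix (Fin n) (Fin n) ℝ) (hM : M.IsHermitian)
    (lam : ℝ) (hlam : lam < eigDesc hM ⟨0, hn⟩)
    (v : Fin n → ℝ) (hv : v ⬝ᵥ v = 1)
    (hveig : M.mulVec v = eigDesc hM ⟨0, hn⟩ • v)
    (hvinf : 0 < ‖v‖)
    (y : Fin n → ℝ)
    (hyfeas : ∀ i, Matrix.vecMulVec y y i i ≤ 1)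
    (hymax : ∀ Y : Matrix (Fin n) (Fin n) ℝ, Y.PosSemidef → (∀ i, Y i i ≤ 1) →
      mip Y (M - lam • (1 : Matrix (Fin n) (Fin n) ℝ)) ≤
        mip (Matrix.vecMulVec y y) (M - lam • (1 : Matrix (Fin n) (Fin n) ℝ))) :
    1 / ‖v‖ ≤ Real.sqrt (y ⬝ᵥ y) :=
  relaxed_oracle_norm_lower_bound_general hn M hM lam hlam v hv hveig y hymax
end

section
/- Let Ã, Â be real symmetric s×s matrices, λ̃, λ ∈ ℝ, and ũ ∈ ℝ^s with ũ_i ≥ 0 for all i. Let Ỹ, Y ∈ ℝ^{s×s} be symmetric matrices with Y_{ii} ≤ 1 for all i. Suppose: (i) (Ã − λ̃I − diag(ũ))·Ỹ = 0; (ii) ũ_i·(Ỹ_{ii} − 1) = 0 for all i; and (iii) ⟨Â − λI, Ỹ − Y⟩ ≤ 0. Then ⟨diag(ũ) − (Ã − λ̃I), Y⟩ ≤ ⟨(Ã − λ̃I) − (Â − λI), Ỹ − Y⟩. -/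
open Matrix

lemma mip_sub_left {d : ℕ} (X Z W : Matrix (Fin d) (Fin d) ℝ) :
    mip (X - Z) W = mip X W - mip Z W := by
  simp [mip, sub_mul, Finset.sum_sub_distrib]

lemma mip_sub_right {d : ℕ} (X Z W : Matrix (Fin d) (Fin d) ℝ) :
    mip X (Z - W) = mip X Z - mip X W := by
  simp [mip, mul_sub, Finset.sum_sub_distrib]

/-- Perturbation bound (Lemma `perturb_bound` of the paper): under the stated KKT-type
conditions, `⟨diag(ũ) − (Ã − λ̃I), Y⟩ ≤ ⟨(Ã − λ̃I) − (Â − λI), Ỹ − Y⟩`. -/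
theorem perturbation_bound
    {s : ℕ} (At Ah : Matrix (Fin s) (Fin s) ℝ)
    (hAt : At.IsHermitian) (hAh : Ah.IsHermitian)
    (lamt lam : ℝ) (u : Fin s → ℝ) (hu : ∀ i, 0 ≤ u i)
    (Yt Y : Matrix (Fin s) (Fin s) ℝ)
    (hYt : Yt.IsHermitian) (hYsym : Y.IsHermitian)
    (hYdiag : ∀ i, Y i i ≤ 1)
    (h1 : (At - lamt • (1 : Matrix (Fin s) (Fin s) ℝ) - Matrix.diagonal u) * Yt = 0)
    (h2 : ∀ i, u i * (Yt i i - 1) = 0)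
    (h3 : mip (Ah - lam • (1 : Matrix (Fin s) (Fin s) ℝ)) (Yt - Y) ≤ 0) :
    mip (Matrix.diagonal u - (At - lamt • (1 : Matrix (Fin s) (Fin s) ℝ))) Y ≤
      mip ((At - lamt • (1 : Matrix (Fin s) (Fin s) ℝ)) -
        (Ah - lam • (1 : Matrix (Fin s) (Fin s) ℝ))) (Yt - Y) := by
  set B := At - lamt • (1 : Matrix (Fin s) (Fin s) ℝ) with hB
  set C := Ah - lam • (1 : Matrix (Fin s) (Fin s) ℝ) with hC
  have hYtsym : ∀ i j, Yt i j = Yt j i := by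
    intro i j
    have := congrFun (congrFun hYt j) i
    simpa [Matrix.conjTranspose_apply] using this
  -- key1 : mip (B - diagonal u) Yt = 0
  have key1 : mip (B - Matrix.diagonal u) Yt = 0 := by
    have : mip (B - Matrix.diagonal u) Yt = ((B - Matrix.diagonal u) * Yt).trace := by
      simp only [mip, Matrix.trace, Matrix.diag, Matrix.mul_apply]
      refine Finset.sum_congr rfl fun i _ => Finset.sum_congr rfl fun j _ => ?_
      rw [hYtsym i j]
    rw [this, h1, Matrix.trace_zero]
  -- key2 : mip (diagonal u) Yt = Σ u i
  have key2 : mip (Matrix.diagonal u) Yt = ∑ i, u i := by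
    simp only [mip]
    have : ∀ i : Fin s, ∑ j, Matrix.diagonal u i j * Yt i j = u i := by
      intro i
      rw [Finset.sum_eq_single i]
      · have := h2 i
        simp [Matrix.diagonal_apply_eq]
        nlinarith [h2 i]
      · intro j _ hj
        rw [Matrix.diagonal_apply_ne u hj.symm, zero_mul]
      · simp
    simp [this]
  -- key3 : mip (diagonal u) Y ≤ Σ u i
  have key3 : mip (Matrix.diagonal u) Y ≤ ∑ i, u i := by
    simp only [mip]
    apply Finset.sum_le_sum
    intro i _
    have : ∑ j, Matrix.diagonal u i j * Y i j = u i * Y i i := by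
      rw [Finset.sum_eq_single i]
      · simp
      · intro j _ hj
        rw [Matrix.diagonal_apply_ne u hj.symm, zero_mul]
      · simp
    rw [this]
    nlinarith [hu i, hYdiag i]

  have e1 : mip (Matrix.diagonal u - B) Y = mip (Matrix.diagonal u) Y - mip B Y :=
    mip_sub_left _ _ _
  have e2 : mip (B - C) (Yt - Y) = (mip B Yt - mip B Y) - mip C (Yt - Y) := by
    rw [mip_sub_left, mip_sub_right]
  have e3 : mip (B - Matrix.diagonal u) Yt = mip B Yt - mip (Matrix.diagonal u) Yt :=
    mip_sub_left _ _ _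
  rw [e1, e2]
  rw [e3, key2] at key1
  linarith
end

section
/- In the gap-recovery setup with 1 ≥ p > q ≥ 0, let Y* = diag(J_{s_1×s_1}, …, J_{s_K×s_K}) be the ground-truth cluster matrix, s̲ = s_{r+1} (with s̲ = 0 if r = K), and let A = (p−q)Y* + qJ + W for a symmetric matrix W ∈ ℝ^{n×n}. Then for any λ ∈ ℝ and any Y ∈ F_n satisfying J̄ ∘ Y = Ȳ: the matrix J̲ ∘ Y is positive semidefinite (so tr(J̲ ∘ Y) ≥ 0), and ⟨Y − Ȳ, A − ((p+q)/2)J⟩ − λ·tr(Y − Ȳ) ≤ (((p−q)/2)·s̲ + ‖W‖_op − λ)·tr(J̲ ∘ Y). -/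
open Matrix

/-- Feasible set of the recovery SDP: symmetric PSD matrices with entries in `[0,1]`. -/
def FeasSDP {d : ℕ} (Y : Matrix (Fin d) (Fin d) ℝ) : Prop :=
  Y.PosSemidef ∧ ∀ i j, 0 ≤ Y i j ∧ Y i j ≤ 1

/-- The ℓ²→ℓ² operator norm (largest singular value) of a real matrix. -/
noncomputable def opNorm {m n : ℕ} (M : Matrix (Fin m) (Fin n) ℝ) : ℝ :=
  ‖(Matrix.toEuclideanLin M).toContinuousLinearMap‖

/-!
Since `J̄ + J̲ = J`, the hypothesis `J̄ ∘ Y = Ȳ` gives `Y − Ȳ = Z := J̲ ∘ Y`. This `Z` is entrywise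
nonnegative, and PSD by the Schur product theorem, as `J̲ = v vᵀ` for the indicator `v` of the
small clusters. Split `A − ((p+q)/2) J = (p−q)(Y* − J/2) + W`. Writing `Z` as a sum of rank-one
PSD matrices gives `⟨Z, W⟩ ≤ ‖W‖ tr Z`. For the signal part, `⟨Z, Y* − J/2⟩ ≤ ½ ⟨Z, Y*⟩`, and
`2 Z_ij ≤ Z_ii + Z_jj` bounds `⟨Z, Y*⟩` by `Σ_i |V_{c(i)}| Z_ii ≤ s̲ tr Z`, because `Z_ii ≠ 0`
only on the small clusters.
-/

open Finset

lemma Matrix.PosSemidef.two_mul_apply_le {ι : Type*} [Fintype ι] [DecidableEq ι]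
    {Z : Matrix ι ι ℝ} (hZ : Z.PosSemidef) (i j : ι) : 2 * Z i j ≤ Z i i + Z j j := by
  have h := hZ.dotProduct_mulVec_nonneg (Pi.single i 1 - Pi.single j 1)
  have hsymm : Z j i = Z i j := hZ.isHermitian.apply i j
  simp only [star_trivial, mulVec_sub, mulVec_single, MulOpposite.op_one, one_smul,
    dotProduct_sub, sub_dotProduct, single_dotProduct, col_apply, one_mul, sub_nonneg,
    tsub_le_iff_right] at h
  linarith

section mip

variable {d : ℕ}

lemma dotProduct_mulVec_le_opNorm_mul (W : Matrix (Fin d) (Fin d) ℝ) (x : Fin d → ℝ) :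
    x ⬝ᵥ W *ᵥ x ≤ opNorm W * (x ⬝ᵥ x) := by
  set u : EuclideanSpace ℝ (Fin d) := WithLp.toLp 2 x
  have hinner : x ⬝ᵥ W *ᵥ x = inner ℝ u (toEuclideanLin W u) := by
    simp [u, EuclideanSpace.inner_eq_star_dotProduct, dotProduct_comm]
  have hnorm : x ⬝ᵥ x = ‖u‖ ^ 2 := by
    rw [EuclideanSpace.real_norm_sq_eq]
    simp [u, dotProduct, sq]
  rw [hinner, hnorm]
  calc inner ℝ u (toEuclideanLin W u) ≤ ‖u‖ * ‖toEuclideanLin W u‖ := real_inner_le_norm _ _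
    _ ≤ ‖u‖ * (opNorm W * ‖u‖) := by
      gcongr; exact (toEuclideanLin W).toContinuousLinearMap.le_opNorm u
    _ = opNorm W * ‖u‖ ^ 2 := by ring

lemma mip_add_right (X M N : Matrix (Fin d) (Fin d) ℝ) : mip X (M + N) = mip X M + mip X N := by
  simp only [mip, Matrix.add_apply, mul_add, sum_add_distrib]

lemma mip_smul_right (X M : Matrix (Fin d) (Fin d) ℝ) (a : ℝ) : mip X (a • M) = a * mip X M := by
  simp only [mip, Matrix.smul_apply, smul_eq_mul, mul_sum, mul_left_comm]

lemma mip_le_mip_of_nonneg {X M N : Matrix (Fin d) (Fin d) ℝ} (hX : ∀ i j, 0 ≤ X i j)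
    (hMN : ∀ i j, M i j ≤ N i j) : mip X M ≤ mip X N := by
  unfold mip
  gcongr with i _ j _
  exacts [hX i j, hMN i j]

lemma mip_sum_left {ι : Type*} (s : Finset ι) (X : ι → Matrix (Fin d) (Fin d) ℝ)
    (M : Matrix (Fin d) (Fin d) ℝ) : mip (∑ k ∈ s, X k) M = ∑ k ∈ s, mip (X k) M := by
  simp only [mip, Matrix.sum_apply, sum_mul]
  exact (sum_congr rfl fun i _ => sum_comm).trans sum_comm

lemma mip_vecMulVec_self (v : Fin d → ℝ) (M : Matrix (Fin d) (Fin d) ℝ) :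
    mip (vecMulVec v v) M = v ⬝ᵥ M *ᵥ v := by
  simp only [mip, vecMulVec_apply, dotProduct, mulVec, mul_sum]
  exact sum_congr rfl fun i _ => sum_congr rfl fun j _ => by ring

lemma mip_le_opNorm_mul_trace {Z : Matrix (Fin d) (Fin d) ℝ} (hZ : Z.PosSemidef)
    (W : Matrix (Fin d) (Fin d) ℝ) : mip Z W ≤ opNorm W * Z.trace := by
  obtain ⟨m, v, rfl⟩ := posSemidef_iff_eq_sum_vecMulVec.mp hZ
  simp only [star_trivial, mip_sum_left, mip_vecMulVec_self, trace_sum, trace_vecMulVec,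
    mul_sum]
  gcongr with k
  exact dotProduct_mulVec_le_opNorm_mul W (v k)

lemma mip_clusterMatrix_le_mul_trace {κ : Type*} [DecidableEq κ]
    {Z : Matrix (Fin d) (Fin d) ℝ} (hZ : Z.PosSemidef) (c : Fin d → κ) {S : ℝ}
    (hS : ∀ i, Z i i ≠ 0 → (#{j | c j = c i} : ℝ) ≤ S) :
    mip Z (of fun i j => if c i = c j then (1 : ℝ) else 0) ≤ S * Z.trace := by
  have hswap : ∑ i, ∑ j, (if c i = c j then Z j j else 0)
      = ∑ i, ∑ j, (if c i = c j then Z i i else 0) := by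
    rw [sum_comm]
    exact sum_congr rfl fun i _ => sum_congr rfl fun j _ => by simp only [@eq_comm _ (c i)]
  calc mip Z (of fun i j => if c i = c j then (1 : ℝ) else 0)
      = ∑ i, ∑ j, (if c i = c j then Z i j else 0) := by simp [mip, mul_ite]
    _ ≤ ∑ i, ∑ j, ((if c i = c j then Z i i else 0) + (if c i = c j then Z j j else 0)) / 2 := by
      refine sum_le_sum fun i _ => sum_le_sum fun j _ => ?_
      split_ifs
      · linarith [hZ.two_mul_apply_le i j]
      · simp
    _ = ∑ i, ∑ j, (if c i = c j then Z i i else 0) := by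
      simp only [add_div, sum_add_distrib, ← sum_div, hswap]
      ring
    _ = ∑ i, (#{j | c j = c i} : ℝ) * Z i i := by
      refine sum_congr rfl fun i _ => ?_
      rw [← sum_filter, sum_const, nsmul_eq_mul]
      simp_rw [eq_comm]
    _ ≤ ∑ i, S * Z i i := by
      refine sum_le_sum fun i _ => ?_
      by_cases hi : Z i i = 0
      · simp [hi]
      · exact mul_le_mul_of_nonneg_right (hS i hi) hZ.diag_nonneg
    _ = S * Z.trace := by rw [trace, mul_sum]; rfl

end mip

lemma posSemidef_of_ite_or {ι : Type*} [Fintype ι] (P : ι → Prop) [DecidablePred P] :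
    (of fun i j => if P i ∨ P j then (0 : ℝ) else 1).PosSemidef := by
  convert posSemidef_vecMulVec_self_star fun i => if P i then (0 : ℝ) else 1
  ext i j
  simp only [of_apply, vecMulVec_apply, star_trivial]
  split_ifs <;> simp_all

lemma sub_hadamard_eq_hadamard {ι : Type*} {J J' : Matrix ι ι ℝ} (hJ : ∀ i j, J i j + J' i j = 1)
    (Y : Matrix ι ι ℝ) : Y - J ⊙ Y = J' ⊙ Y := by
  ext i j
  rw [Matrix.sub_apply, hadamard_apply, hadamard_apply, eq_sub_of_add_eq' (hJ i j)]
  ring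

lemma Antitone.cast_apply_le_of_lt {K : ℕ} {s : Fin K → ℕ} (hs : Antitone s) {r k : Fin K}
    (hrk : r < k) : (s k : ℝ) ≤ if h : (r : ℕ) + 1 < K then (s ⟨(r : ℕ) + 1, h⟩ : ℝ) else 0 := by
  have hK : (r : ℕ) + 1 < K := lt_of_le_of_lt hrk k.isLt
  rw [dif_pos hK]
  exact_mod_cast hs (show (⟨(r : ℕ) + 1, hK⟩ : Fin K) ≤ k from hrk)

theorem gap_recovery_small_cluster_bound_general
    {n K : ℕ} (s : Fin K → ℕ) (hs : Antitone s)
    (c : Fin n → Fin K)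
    (hcount : ∀ k, (Finset.univ.filter fun i => c i = k).card = s k)
    (r : Fin K)
    (p q : ℝ) (hpq : q < p)
    (Yb Jbar Jlow Ystar Jmat : Matrix (Fin n) (Fin n) ℝ)
    (hJbar : Jbar = Matrix.of fun i j => if c i ≤ r ∨ c j ≤ r then (1 : ℝ) else 0)
    (hJlow : Jlow = Matrix.of fun i j => if c i ≤ r ∨ c j ≤ r then (0 : ℝ) else 1)
    (hYstar : Ystar = Matrix.of fun i j => if c i = c j then (1 : ℝ) else 0)
    (hJmat : Jmat = Matrix.of fun _ _ => (1 : ℝ))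
    (sLow : ℝ)
    (hsLow : sLow = if h : (r : ℕ) + 1 < K then (s ⟨(r : ℕ) + 1, h⟩ : ℝ) else 0)
    (W : Matrix (Fin n) (Fin n) ℝ)
    (A : Matrix (Fin n) (Fin n) ℝ) (hA : A = (p - q) • Ystar + q • Jmat + W)
    (lam : ℝ)
    (Y : Matrix (Fin n) (Fin n) ℝ) (hY : FeasSDP Y)
    (hYbig : Matrix.hadamard Jbar Y = Yb) :
    (Matrix.hadamard Jlow Y).PosSemidef ∧
      mip (Y - Yb) (A - ((p + q) / 2) • Jmat) - lam * (Y - Yb).trace ≤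
        ((p - q) / 2 * sLow + opNorm W - lam) * (Matrix.hadamard Jlow Y).trace := by
  set Z := Jlow ⊙ Y
  have hZ : Z.PosSemidef := (hJlow ▸ posSemidef_of_ite_or fun i => c i ≤ r).hadamard hY.1
  have hYZ : Y - Yb = Z := by
    refine hYbig ▸ sub_hadamard_eq_hadamard (fun i j => ?_) Y
    simp only [hJbar, hJlow, of_apply]
    split_ifs <;> norm_num
  have hZ_nonneg : ∀ i j, 0 ≤ Z i j := fun i j => by
    simp only [Z, hJlow, hadamard_apply, of_apply]
    split_ifs <;> simp [(hY.2 i j).1]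
  have hclusters : ∀ i, Z i i ≠ 0 → (#{j | c j = c i} : ℝ) ≤ sLow := fun i hi => by
    rw [hcount, hsLow]
    refine hs.cast_apply_le_of_lt (not_le.mp fun h => hi ?_)
    simp [Z, hJlow, h]
  have hsplit : A - ((p + q) / 2) • Jmat = (p - q) • (Ystar - (1 / 2 : ℝ) • Jmat) + W := by
    rw [hA]; module
  have hshift : ∀ i j, (Ystar - (1 / 2 : ℝ) • Jmat) i j ≤ ((1 / 2 : ℝ) • Ystar) i j := by
    intro i j
    simp only [hYstar, hJmat, Matrix.sub_apply, Matrix.smul_apply, of_apply, smul_eq_mul]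
    split_ifs <;> norm_num
  have hpq' : 0 ≤ p - q := sub_nonneg.2 hpq.le
  refine ⟨hZ, ?_⟩
  rw [hYZ, hsplit, mip_add_right, mip_smul_right]
  calc (p - q) * mip Z (Ystar - (1 / 2 : ℝ) • Jmat) + mip Z W - lam * Z.trace
      ≤ (p - q) * (1 / 2 * mip Z Ystar) + opNorm W * Z.trace - lam * Z.trace := by
        gcongr
        exacts [(mip_le_mip_of_nonneg hZ_nonneg hshift).trans_eq (mip_smul_right _ _ _),
          mip_le_opNorm_mul_trace hZ W]
    _ ≤ (p - q) * (1 / 2 * (sLow * Z.trace)) + opNorm W * Z.trace - lam * Z.trace := by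
        gcongr
        exact hYstar ▸ mip_clusterMatrix_le_mul_trace hZ c hclusters
    _ = ((p - q) / 2 * sLow + opNorm W - lam) * Z.trace := by ring

/-- Lower block bound in the gap-recovery setup: with `A = (p−q)Y* + qJ + W` and
any `Y ∈ F_n` whose "big" part agrees with `Ȳ` (`J̄ ∘ Y = Ȳ`), the matrix `J̲ ∘ Y`
is PSD and `⟨Y − Ȳ, A − ((p+q)/2)J⟩ − λ·tr(Y − Ȳ) ≤ (((p−q)/2)s̲ + ‖W‖_op − λ)·tr(J̲ ∘ Y)`. -/
theorem gap_recovery_small_cluster_bound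
    {n K : ℕ} (s : Fin K → ℕ) (hs : Antitone s) (hspos : ∀ k, 0 < s k)
    (c : Fin n → Fin K) (hc : Monotone c)
    (hcount : ∀ k, (Finset.univ.filter fun i => c i = k).card = s k)
    (r : Fin K)
    (p q : ℝ) (hp : p ≤ 1) (hpq : q < p) (hq : 0 ≤ q)
    (Yb Jbar Jlow Ystar Jmat : Matrix (Fin n) (Fin n) ℝ)
    (hYb : Yb = Matrix.of fun i j => if c i = c j ∧ c i ≤ r then (1 : ℝ) else 0)
    (hJbar : Jbar = Matrix.of fun i j => if c i ≤ r ∨ c j ≤ r then (1 : ℝ) else 0)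
    (hJlow : Jlow = Matrix.of fun i j => if c i ≤ r ∨ c j ≤ r then (0 : ℝ) else 1)
    (hYstar : Ystar = Matrix.of fun i j => if c i = c j then (1 : ℝ) else 0)
    (hJmat : Jmat = Matrix.of fun _ _ => (1 : ℝ))
    (sLow : ℝ)
    (hsLow : sLow = if h : (r : ℕ) + 1 < K then (s ⟨(r : ℕ) + 1, h⟩ : ℝ) else 0)
    (W : Matrix (Fin n) (Fin n) ℝ) (hW : W.IsHermitian)
    (A : Matrix (Fin n) (Fin n) ℝ) (hA : A = (p - q) • Ystar + q • Jmat + W)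
    (lam : ℝ)
    (Y : Matrix (Fin n) (Fin n) ℝ) (hY : FeasSDP Y)
    (hYbig : Matrix.hadamard Jbar Y = Yb) :
    (Matrix.hadamard Jlow Y).PosSemidef ∧
      mip (Y - Yb) (A - ((p + q) / 2) • Jmat) - lam * (Y - Yb).trace ≤
        ((p - q) / 2 * sLow + opNorm W - lam) * (Matrix.hadamard Jlow Y).trace :=
  gap_recovery_small_cluster_bound_general s hs c hcount r p q hpq Yb Jbar Jlow Ystar Jmat hJbar
    hJlow hYstar hJmat sLow hsLow W A hA lam Y hY hYbig
end
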